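/- arXiv:2307.06643 — 2 statements merged into one kernel-verified Lean document; each statement's English description precedes it below -/
import Mathlib

section
/- Let f, s : ℤ → ℝ be positive sequences, ε_f ≥ 0 and ε_σ ≥ 0, and suppose |f(t+1) − f(t)| ≤ ε_f·f(t) and |s(t+1) − s(t)| ≤ ε_σ·s(t) for all t ∈ ℤ. Let μ > 0, let n : ℤ → ℝ be positive, fix t ∈ ℤ and an integer w ≥ 1 with w·ε_f < 1 and w·ε_σ < 1, and set n_w = Σ_{i=−w}^{w} n(t+i), m_w = Σ_{i=−w}^{w} (n(t+i)/n_w)·μ·f(t+i), and v_w = Σ_{i=−w}^{w} (n(t+i)/n_w²)·s(t+i). Assume (1 + w·ε_σ/(1 − w·ε_σ))·√(n(t)/n_w) < 1. Then for every λ ≥ (w·ε_f/(1 − w·ε_f)) / (1 − (1 + w·ε_σ/(1 − w·ε_σ))·√(n(t)/n_w)): N(m_w, v_w)({x ∈ ℝ : |x/μ − f(t)| ≥ λ·f(t)}) ≤ N(μ·f(t), s(t)/n(t))({x ∈ ℝ : |x/μ − f(t)| ≥ λ·f(t)}). -/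
open MeasureTheory ProbabilityTheory
open scoped NNReal

/-!
Bounded relative drift keeps every `f (t + i)`, `s (t + i)` of the window within relative error
`ρ = w ε / (1 - w ε)` of `f t`, `s t`. So the smoothed mean is within `ρ_f μ f t` of `μ f t`, and
the smoothed variance is at most `(1 + ρ_σ) s t / n_w`, making its standard deviation at most
`c` times the raw one, `c = (1 + ρ_σ) √(n t / n_w) < 1`. After standardizing, the smoothed tail
`|x - μ f t| ≥ r` lies in `|y| ≥ (r - ρ_f μ f t) / σ_w`, and for `r = λ μ f t` with
`λ ≥ ρ_f / (1 - c)` this threshold dominates the raw one, `r / σ_t`.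
-/

section WeightedAverage

variable {ι : Type*} {I : Finset ι} {n x : ι → ℝ}

lemma abs_sum_div_mul_sub_le {a δ : ℝ} (hn : ∀ i ∈ I, 0 ≤ n i) (hN : ∑ i ∈ I, n i ≠ 0)
    (hx : ∀ i ∈ I, |x i - a| ≤ δ) :
    |∑ i ∈ I, n i / (∑ j ∈ I, n j) * x i - a| ≤ δ := by
  have hmem := (convex_closedBall a δ).sum_mem (t := I) (w := fun i => n i / ∑ j ∈ I, n j)
    (z := x) (fun i hi => div_nonneg (hn i hi) (Finset.sum_nonneg hn))
    (by rw [← Finset.sum_div, div_self hN]) (fun i hi => by simpa [Real.dist_eq] using hx i hi)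
  simpa [Real.dist_eq] using hmem

lemma sum_div_sq_mul_le {b : ℝ} (hn : ∀ i ∈ I, 0 ≤ n i) (hx : ∀ i ∈ I, x i ≤ b) :
    ∑ i ∈ I, n i / (∑ j ∈ I, n j) ^ 2 * x i ≤ b / ∑ j ∈ I, n j := by
  calc ∑ i ∈ I, n i / (∑ j ∈ I, n j) ^ 2 * x i
      ≤ ∑ i ∈ I, n i / (∑ j ∈ I, n j) ^ 2 * b :=
        Finset.sum_le_sum fun i hi =>
          mul_le_mul_of_nonneg_left (hx i hi) (div_nonneg (hn i hi) (sq_nonneg _))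
    _ = b / ∑ j ∈ I, n j := by
        rw [← Finset.sum_mul, ← Finset.sum_div, sq, div_self_mul_self', inv_mul_eq_div]

end WeightedAverage

lemma abs_sub_add_le_of_mem_Icc {k : ℕ} {i : ℤ} (t : ℤ) (hi : i ∈ Finset.Icc (-(k : ℤ)) k) :
    |t - (t + i)| ≤ k := by
  rw [Finset.mem_Icc] at hi; rw [abs_le]; omega

def RelDriftLE (g : ℤ → ℝ) (ε : ℝ) : Prop :=
  ∀ u, |g (u + 1) - g u| ≤ ε * g u

namespace RelDriftLE

variable {g n : ℤ → ℝ} {ε : ℝ}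

lemma one_sub_mul_le_of_abs_sub_le_one (hd : RelDriftLE g ε) (hg : ∀ u, 0 ≤ g u) (hε1 : ε ≤ 1)
    {u v : ℤ} (huv : |u - v| ≤ 1) :
    (1 - ε) * g u ≤ g v := by
  obtain rfl | rfl | rfl : v = u - 1 ∨ v = u ∨ v = u + 1 := by
    rw [abs_le] at huv; omega
  · have h := abs_le.1 (hd (u - 1))
    rw [sub_add_cancel] at h
    nlinarith [mul_le_mul_of_nonneg_left h.2 (sub_nonneg.2 hε1),
      mul_nonneg (sq_nonneg ε) (hg (u - 1))]
  · linarith [(abs_nonneg _).trans (hd v)]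
  · linarith [(abs_le.1 (hd u)).1]

lemma one_sub_pow_mul_le (hd : RelDriftLE g ε) (hg : ∀ u, 0 ≤ g u) (hε1 : ε ≤ 1) (k : ℕ)
    {u v : ℤ} (huv : |u - v| ≤ k) :
    (1 - ε) ^ k * g u ≤ g v := by
  induction k generalizing u with
  | zero => rw [Nat.cast_zero, abs_nonpos_iff, sub_eq_zero] at huv; simp [huv]
  | succ k ih =>
    obtain ⟨u', hu', hu'v⟩ : ∃ u', |u - u'| ≤ 1 ∧ |u' - v| ≤ k :=
      ⟨max (v - k) (min u (v + k)), by simp only [abs_le] at huv ⊢; omega⟩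
    calc (1 - ε) ^ (k + 1) * g u = (1 - ε) ^ k * ((1 - ε) * g u) := by ring
      _ ≤ (1 - ε) ^ k * g u' :=
        mul_le_mul_of_nonneg_left (hd.one_sub_mul_le_of_abs_sub_le_one hg hε1 hu')
          (pow_nonneg (sub_nonneg.2 hε1) k)
      _ ≤ g v := ih hu'v

lemma one_sub_mul_le (hd : RelDriftLE g ε) (hg : ∀ u, 0 ≤ g u) (hε1 : ε ≤ 1) {k : ℕ}
    {u v : ℤ} (huv : |u - v| ≤ k) :
    (1 - k * ε) * g u ≤ g v := by
  have bernoulli : 1 - k * ε ≤ (1 - ε) ^ k := by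
    simpa [← sub_eq_add_neg] using one_add_mul_le_pow (a := -ε) (by linarith) k
  exact (mul_le_mul_of_nonneg_right bernoulli (hg u)).trans (hd.one_sub_pow_mul_le hg hε1 k huv)

lemma abs_sub_le (hd : RelDriftLE g ε) (hg : ∀ u, 0 ≤ g u) (hε0 : 0 ≤ ε) {k : ℕ}
    (hkε : k * ε < 1) {u v : ℤ} (huv : |u - v| ≤ k) :
    |g v - g u| ≤ k * ε / (1 - k * ε) * g u := by
  rcases k.eq_zero_or_pos with rfl | hk
  · obtain rfl : u = v := by simpa [sub_eq_zero] using huv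
    simp
  have hε1 : ε ≤ 1 := (le_mul_of_one_le_left hε0 (by exact_mod_cast hk)).trans hkε.le
  have hpos : 0 < 1 - k * ε := by linarith
  have hlow := hd.one_sub_mul_le hg hε1 huv
  have hupp := hd.one_sub_mul_le hg hε1 (u := v) (v := u) (by rwa [abs_sub_comm])
  have hkε_le : k * ε * g u ≤ k * ε / (1 - k * ε) * g u :=
    mul_le_mul_of_nonneg_right
      (le_div_self (by positivity) hpos (sub_le_self _ (by positivity))) (hg u)
  have hupp' : g v - g u ≤ k * ε / (1 - k * ε) * g u := by
    rw [div_mul_eq_mul_div, le_div_iff₀ hpos]; linarith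
  rw [abs_le]; constructor <;> linarith

lemma abs_sum_Icc_div_mul_sub_le (hd : RelDriftLE g ε) (hg : ∀ u, 0 ≤ g u) (hε0 : 0 ≤ ε)
    {k : ℕ} (hkε : k * ε < 1) (hn : ∀ u, 0 < n u) (t : ℤ) :
    |∑ i ∈ Finset.Icc (-(k : ℤ)) k, n (t + i) / (∑ j ∈ Finset.Icc (-(k : ℤ)) k, n (t + j))
        * g (t + i) - g t| ≤ k * ε / (1 - k * ε) * g t :=
  abs_sum_div_mul_sub_le (fun _ _ => (hn _).le)
    (Finset.sum_pos (fun _ _ => hn _) ⟨0, by simp⟩).ne'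
    fun _ hi => hd.abs_sub_le hg hε0 hkε (abs_sub_add_le_of_mem_Icc t hi)

lemma sum_Icc_div_sq_mul_le (hd : RelDriftLE g ε) (hg : ∀ u, 0 ≤ g u) (hε0 : 0 ≤ ε)
    {k : ℕ} (hkε : k * ε < 1) (hn : ∀ u, 0 ≤ n u) (t : ℤ) :
    ∑ i ∈ Finset.Icc (-(k : ℤ)) k, n (t + i) / (∑ j ∈ Finset.Icc (-(k : ℤ)) k, n (t + j)) ^ 2
        * g (t + i)
      ≤ (1 + k * ε / (1 - k * ε)) * g t / ∑ j ∈ Finset.Icc (-(k : ℤ)) k, n (t + j) :=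
  sum_div_sq_mul_le (fun _ _ => hn _) fun _ hi => by
    linarith [(abs_le.1 (hd.abs_sub_le hg hε0 hkε (abs_sub_add_le_of_mem_Icc t hi))).2]

end RelDriftLE

lemma gaussianReal_setOf_le_abs_sub_eq (m a : ℝ) {v : ℝ} (hv : 0 < v) :
    gaussianReal m v.toNNReal {x | a ≤ |x - m|} = gaussianReal 0 1 {y | a / √v ≤ |y|} := by
  have hσ : 0 < √v := Real.sqrt_pos.2 hv
  have hstd : ((gaussianReal m v.toNNReal).map (· - m)).map (· / √v) = gaussianReal 0 1 := by
    rw [gaussianReal_map_sub_const, gaussianReal_map_div_const, sub_self, zero_div]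
    congr 1
    ext
    simp [Real.sq_sqrt hv.le, Real.coe_toNNReal _ hv.le, hv.ne']
  rw [← hstd, Measure.map_apply (by fun_prop) (measurableSet_le measurable_const (by fun_prop)),
    Measure.map_apply (by fun_prop) (by measurability)]
  congr 1
  ext x
  simp [abs_div, abs_of_pos hσ, div_le_div_iff_of_pos_right hσ]

lemma gaussianReal_setOf_le_abs_sub_le {m₁ m₂ v₁ v₂ r : ℝ} (hv₁ : 0 < v₁) (hv₂ : 0 < v₂)
    (h : r / √v₂ ≤ (r - |m₁ - m₂|) / √v₁) :
    gaussianReal m₁ v₁.toNNReal {x | r ≤ |x - m₂|}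
      ≤ gaussianReal m₂ v₂.toNNReal {x | r ≤ |x - m₂|} :=
  calc gaussianReal m₁ v₁.toNNReal {x | r ≤ |x - m₂|}
      ≤ gaussianReal m₁ v₁.toNNReal {x | r - |m₁ - m₂| ≤ |x - m₁|} :=
        measure_mono fun x (hx : r ≤ |x - m₂|) => by
          show r - |m₁ - m₂| ≤ |x - m₁|
          linarith [abs_sub_le x m₁ m₂]
    _ = gaussianReal 0 1 {y | (r - |m₁ - m₂|) / √v₁ ≤ |y|} :=
        gaussianReal_setOf_le_abs_sub_eq _ _ hv₁
    _ ≤ gaussianReal 0 1 {y | r / √v₂ ≤ |y|} := measure_mono fun y hy => h.trans hy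
    _ = gaussianReal m₂ v₂.toNNReal {x | r ≤ |x - m₂|} :=
        (gaussianReal_setOf_le_abs_sub_eq _ _ hv₂).symm

lemma gaussianReal_setOf_le_abs_sub_le_of_sqrt_le {m₁ m₂ v₁ v₂ c r : ℝ} (hv₁ : 0 < v₁)
    (hv₂ : 0 < v₂) (hr : 0 ≤ r) (hσ : √v₁ ≤ c * √v₂) (hm : |m₁ - m₂| ≤ (1 - c) * r) :
    gaussianReal m₁ v₁.toNNReal {x | r ≤ |x - m₂|}
      ≤ gaussianReal m₂ v₂.toNNReal {x | r ≤ |x - m₂|} := by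
  have hσ₁ : 0 < √v₁ := Real.sqrt_pos.2 hv₁
  have hc : 0 < c := pos_of_mul_pos_left (hσ₁.trans_le hσ) (Real.sqrt_nonneg _)
  refine gaussianReal_setOf_le_abs_sub_le hv₁ hv₂ ?_
  calc r / √v₂ = c * r / (c * √v₂) := (mul_div_mul_left _ _ hc.ne').symm
    _ ≤ c * r / √v₁ := div_le_div_of_nonneg_left (by positivity) hσ₁ hσ
    _ ≤ (r - |m₁ - m₂|) / √v₁ := div_le_div_of_nonneg_right (by linarith) hσ₁.le

lemma sqrt_le_of_le_one_add_mul_div {v a b N ρ : ℝ} (hρ : 0 ≤ ρ) (ha : 0 ≤ a) (hb : 0 < b)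
    (hN : 0 < N) (hv : v ≤ (1 + ρ) * a / N) :
    √v ≤ (1 + ρ) * √(b / N) * √(a / b) := by
  rw [Real.sqrt_le_left (by positivity), mul_pow, mul_pow, Real.sq_sqrt (by positivity),
    Real.sq_sqrt (by positivity)]
  calc v ≤ (1 + ρ) * a / N := hv
    _ ≤ (1 + ρ) ^ 2 * a / N := by gcongr; exact le_self_pow₀ (by linarith) two_ne_zero
    _ = (1 + ρ) ^ 2 * (b / N) * (a / b) := by field_simp

lemma setOf_abs_div_sub_ge {μ : ℝ} (hμ : 0 < μ) (a b : ℝ) :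
    {x : ℝ | |x / μ - a| ≥ b} = {x | μ * b ≤ |x - μ * a|} := by
  ext x
  show b ≤ |x / μ - a| ↔ μ * b ≤ |x - μ * a|
  rw [show x - μ * a = μ * (x / μ - a) by field_simp, abs_mul, abs_of_pos hμ,
    mul_le_mul_iff_right₀ hμ]

theorem weighted_moving_average_better_general (f s : ℤ → ℝ)
    (hf : ∀ t, 0 < f t) (hs : ∀ t, 0 < s t)
    (εf εσ : ℝ) (hεf : 0 ≤ εf) (hεσ : 0 ≤ εσ)
    (hdf : ∀ t : ℤ, |f (t + 1) - f t| ≤ εf * f t)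
    (hds : ∀ t : ℤ, |s (t + 1) - s t| ≤ εσ * s t)
    (μ : ℝ) (hμ : 0 < μ) (n : ℤ → ℝ) (hn : ∀ t, 0 < n t)
    (t : ℤ) (w : ℕ)
    (hwεf : (w : ℝ) * εf < 1) (hwεσ : (w : ℝ) * εσ < 1)
    (nw mw vw : ℝ)
    (hnw : nw = ∑ i ∈ Finset.Icc (-(w : ℤ)) (w : ℤ), n (t + i))
    (hmw : mw = ∑ i ∈ Finset.Icc (-(w : ℤ)) (w : ℤ), (n (t + i) / nw) * (μ * f (t + i)))
    (hvw : vw = ∑ i ∈ Finset.Icc (-(w : ℤ)) (w : ℤ), (n (t + i) / nw ^ 2) * s (t + i))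
    (hratio : (1 + (w : ℝ) * εσ / (1 - (w : ℝ) * εσ)) * Real.sqrt (n t / nw) < 1) :
    ∀ lam : ℝ,
      ((w : ℝ) * εf / (1 - (w : ℝ) * εf)) /
          (1 - (1 + (w : ℝ) * εσ / (1 - (w : ℝ) * εσ)) * Real.sqrt (n t / nw)) ≤ lam →
      gaussianReal mw vw.toNNReal {x : ℝ | |x / μ - f t| ≥ lam * f t} ≤
      gaussianReal (μ * f t) ((s t / n t).toNNReal)
        {x : ℝ | |x / μ - f t| ≥ lam * f t} := by
  intro lam hlam
  set ρf := (w : ℝ) * εf / (1 - (w : ℝ) * εf)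
  set ρσ := (w : ℝ) * εσ / (1 - (w : ℝ) * εσ)
  set c := (1 + ρσ) * √(n t / nw)
  have hnw0 : 0 < nw := hnw ▸ Finset.sum_pos (fun _ _ => hn _) ⟨0, by simp⟩
  have hc : 0 < 1 - c := sub_pos.2 hratio
  have hlam' : ρf ≤ (1 - c) * lam := by rwa [div_le_iff₀ hc, mul_comm] at hlam
  have hlam0 : 0 ≤ lam :=
    nonneg_of_mul_nonneg_right ((div_nonneg (by positivity) (by linarith)).trans hlam') hc
  have hmean : |mw - μ * f t| ≤ (1 - c) * (μ * (lam * f t)) := by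
    have hf_avg := RelDriftLE.abs_sum_Icc_div_mul_sub_le hdf (fun u => (hf u).le) hεf hwεf hn t
    have hmw' : mw = μ * ∑ i ∈ Finset.Icc (-(w : ℤ)) w, n (t + i) / nw * f (t + i) := by
      rw [hmw, Finset.mul_sum]; simp_rw [mul_left_comm μ]
    rw [← hnw] at hf_avg
    rw [hmw', ← mul_sub, abs_mul, abs_of_pos hμ]
    nlinarith [mul_le_mul_of_nonneg_left hf_avg hμ.le,
      mul_le_mul_of_nonneg_right hlam' (mul_pos hμ (hf t)).le]
  have hvar : vw ≤ (1 + ρσ) * s t / nw := by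
    rw [hvw, hnw]
    exact RelDriftLE.sum_Icc_div_sq_mul_le hds (fun u => (hs u).le) hεσ hwεσ (fun u => (hn u).le) t
  have hvw0 : 0 < vw := hvw ▸ Finset.sum_pos
    (fun _ _ => mul_pos (div_pos (hn _) (by positivity)) (hs _)) ⟨0, by simp⟩
  rw [setOf_abs_div_sub_ge hμ]
  exact gaussianReal_setOf_le_abs_sub_le_of_sqrt_le hvw0 (div_pos (hs t) (hn t))
    (mul_nonneg hμ.le (mul_nonneg hlam0 (hf t).le))
    (sqrt_le_of_le_one_add_mul_div (div_nonneg (by positivity) (by linarith)) (hs t).le (hn t)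
      hnw0 hvar) hmean

/-- Paper Theorem 7: the weighted moving average of the responses is a better
estimator than the raw response, for the Gaussian approximations furnished by
the CLT. -/
theorem weighted_moving_average_better (f s : ℤ → ℝ)
    (hf : ∀ t, 0 < f t) (hs : ∀ t, 0 < s t)
    (εf εσ : ℝ) (hεf : 0 ≤ εf) (hεσ : 0 ≤ εσ)
    (hdf : ∀ t : ℤ, |f (t + 1) - f t| ≤ εf * f t)
    (hds : ∀ t : ℤ, |s (t + 1) - s t| ≤ εσ * s t)
    (μ : ℝ) (hμ : 0 < μ) (n : ℤ → ℝ) (hn : ∀ t, 0 < n t)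
    (t : ℤ) (w : ℕ) (hw : 1 ≤ w)
    (hwεf : (w : ℝ) * εf < 1) (hwεσ : (w : ℝ) * εσ < 1)
    (nw mw vw : ℝ)
    (hnw : nw = ∑ i ∈ Finset.Icc (-(w : ℤ)) (w : ℤ), n (t + i))
    (hmw : mw = ∑ i ∈ Finset.Icc (-(w : ℤ)) (w : ℤ), (n (t + i) / nw) * (μ * f (t + i)))
    (hvw : vw = ∑ i ∈ Finset.Icc (-(w : ℤ)) (w : ℤ), (n (t + i) / nw ^ 2) * s (t + i))
    (hratio : (1 + (w : ℝ) * εσ / (1 - (w : ℝ) * εσ)) * Real.sqrt (n t / nw) < 1) :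
    ∀ lam : ℝ,
      ((w : ℝ) * εf / (1 - (w : ℝ) * εf)) /
          (1 - (1 + (w : ℝ) * εσ / (1 - (w : ℝ) * εσ)) * Real.sqrt (n t / nw)) ≤ lam →
      gaussianReal mw vw.toNNReal {x : ℝ | |x / μ - f t| ≥ lam * f t} ≤
      gaussianReal (μ * f t) ((s t / n t).toNNReal)
        {x : ℝ | |x / μ - f t| ≥ lam * f t} :=
  weighted_moving_average_better_general f s hf hs εf εσ hεf hεσ hdf hds μ hμ n hn t w hwεf hwεσ nw
    mw vw hnw hmw hvw hratio
end

section
/- Let g : ℤ → ℝ satisfy g(t) ≥ 0 for all t, and let ε ≥ 0 satisfy |g(t+1) − g(t)| ≤ ε·g(t) for all t ∈ ℤ. Let w ≥ 1 be an integer with w·ε < 1, let n(t−w), …, n(t+w) be positive reals, and set n_w = Σ_{i=−w}^{w} n(t+i), μ_n = n_w/(2w+1), and σ_n = √(Σ_{i=−w}^{w} (n(t+i) − μ_n)²/(2w+1)). Suppose moreover that E ≥ 0 satisfies |(1/(2w+1))·Σ_{i=−w}^{w} g(t+i) − g(t)| ≤ E·g(t). Then |(1/n_w)·Σ_{i=−w}^{w}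 n(t+i)·g(t+i) − g(t)| ≤ (E + (σ_n/μ_n)·(w·ε/(1 − w·ε)))·g(t). -/
/-!
Since the deviations `n(t+i) − μ_n` sum to zero, the weighted average minus `g(t)` is the
unweighted average minus `g(t)` plus the covariance term
`(1/n_w) Σ (n(t+i) − μ_n)(g(t+i) − g(t))`. A step bound `|g(u+1) − g(u)| ≤ ε g(u)` makes
`g(u)` and `g(u±1)` agree up to a factor `1 − ε`, hence `g(t)` and `g(t+i)` up to
`(1 − ε)^|i| ≥ 1 − wε` (Bernoulli), i.e. `|g(t+i) − g(t)| ≤ wε/(1 − wε) · g(t)` on the window.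
Cauchy–Schwarz gives `Σ |n(t+i) − μ_n| ≤ (2w+1) σ_n`, and `(2w+1)/n_w = 1/μ_n`.
-/

open Finset

section RelativeSteps

variable {g : ℤ → ℝ} {c : ℝ}

lemma pow_mul_le_add_of_mul_le_succ (hc : 0 ≤ c) (hstep : ∀ u, c * g u ≤ g (u + 1))
    (u : ℤ) (k : ℕ) : c ^ k * g u ≤ g (u + k) := by
  induction k with
  | zero => simp
  | succ k ih =>
    calc c ^ (k + 1) * g u = c * (c ^ k * g u) := by ring
      _ ≤ c * g (u + k) := mul_le_mul_of_nonneg_left ih hc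
      _ ≤ g (u + k + 1) := hstep _
      _ = g (u + (k + 1 : ℕ)) := by push_cast; ring_nf

lemma pow_natAbs_sub_mul_le (hc : 0 ≤ c) (hfwd : ∀ u, c * g u ≤ g (u + 1))
    (hbwd : ∀ u, c * g (u + 1) ≤ g u) (u v : ℤ) : c ^ (v - u).natAbs * g u ≤ g v := by
  rcases Int.natAbs_eq (v - u) with h | h
  · simpa [← h] using pow_mul_le_add_of_mul_le_succ hc hfwd u (v - u).natAbs
  · have hrev : ∀ u, c * g (-u) ≤ g (-(u + 1)) := fun u => by
      simpa [neg_add_eq_sub, sub_add_cancel] using hbwd (-u - 1)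
    have hv : -(-u + ((v - u).natAbs : ℤ)) = v := by omega
    simpa only [neg_neg, hv] using
      pow_mul_le_add_of_mul_le_succ (g := fun u => g (-u)) hc hrev (-u) (v - u).natAbs

end RelativeSteps

lemma one_sub_mul_le_of_abs_sub_le {a b ε : ℝ} (ha : 0 ≤ a) (hε : ε ≤ 1)
    (h : |b - a| ≤ ε * a) : (1 - ε) * a ≤ b ∧ (1 - ε) * b ≤ a := by
  obtain ⟨hlo, hhi⟩ := abs_le.mp h
  refine ⟨by linarith, ?_⟩
  nlinarith [mul_le_mul_of_nonneg_left hhi (sub_nonneg.mpr hε), sq_nonneg ε]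

lemma abs_sub_le_div_one_sub_mul {a b η : ℝ} (hη : η < 1) (ha : 0 ≤ a)
    (hab : (1 - η) * a ≤ b) (hba : (1 - η) * b ≤ a) : |b - a| ≤ η / (1 - η) * a := by
  have hpos : 0 < 1 - η := by linarith
  have hscale : (1 - η) * (η / (1 - η) * a) = η * a := by field_simp
  rw [abs_le]
  constructor <;> apply le_of_mul_le_mul_left _ hpos
  · nlinarith [mul_le_mul_of_nonneg_left hab hpos.le, mul_nonneg (sq_nonneg η) ha]
  · nlinarith

theorem abs_sub_le_of_abs_succ_sub_le {g : ℤ → ℝ} {ε : ℝ} (hg : ∀ t, 0 ≤ g t) (hε : 0 ≤ ε)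
    (hε₁ : ε ≤ 1) (hdiff : ∀ t, |g (t + 1) - g t| ≤ ε * g t) {w : ℕ} (hwε : w * ε < 1)
    {t i : ℤ} (hi : i.natAbs ≤ w) : |g (t + i) - g t| ≤ w * ε / (1 - w * ε) * g t := by
  have hstep u := one_sub_mul_le_of_abs_sub_le (hg u) hε₁ (hdiff u)
  have hc : 0 ≤ 1 - ε := sub_nonneg.mpr hε₁
  have hbernoulli : 1 - w * ε ≤ (1 - ε) ^ i.natAbs :=
    calc 1 - w * ε = 1 + w * (-ε) := by ring
      _ ≤ (1 + -ε) ^ w := one_add_mul_le_pow (by linarith) w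
      _ = (1 - ε) ^ w := by rw [← sub_eq_add_neg]
      _ ≤ (1 - ε) ^ i.natAbs := pow_le_pow_of_le_one hc (by linarith) hi
  have hfar u v (huv : (v - u).natAbs = i.natAbs) : (1 - w * ε) * g u ≤ g v :=
    calc (1 - w * ε) * g u ≤ (1 - ε) ^ i.natAbs * g u :=
          mul_le_mul_of_nonneg_right hbernoulli (hg u)
      _ ≤ g v := huv ▸ pow_natAbs_sub_mul_le hc (fun u => (hstep u).1) (fun u => (hstep u).2) u v
  exact abs_sub_le_div_one_sub_mul hwε (hg t) (hfar t (t + i) (by simp))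
    (hfar (t + i) t (by simp))

section WeightedAverage

variable {ι : Type*} {s : Finset ι}

lemma sum_sub_sum_div_card (s : Finset ι) (f : ι → ℝ) :
    ∑ i ∈ s, (f i - (∑ j ∈ s, f j) / #s) = 0 := by
  rcases s.eq_empty_or_nonempty with rfl | hs
  · simp
  · rw [sum_sub_distrib, sum_const, nsmul_eq_mul, mul_div_cancel₀ _ (by simp [hs.ne_empty]),
      sub_self]

lemma weighted_average_sub_eq {n g : ι → ℝ} (a : ℝ) (hn : ∑ i ∈ s, n i ≠ 0) :
    1 / (∑ i ∈ s, n i) * ∑ i ∈ s, n i * g i - a =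
      (1 / #s * ∑ i ∈ s, g i - a) +
        1 / (∑ i ∈ s, n i) * ∑ i ∈ s, (n i - (∑ j ∈ s, n j) / #s) * (g i - a) := by
  have hs : (#s : ℝ) ≠ 0 := by
    rintro hs
    simp_all
  have hcentered := sum_sub_sum_div_card s n
  have hexpand : ∑ i ∈ s, (n i - (∑ j ∈ s, n j) / #s) * (g i - a) =
      ∑ i ∈ s, n i * g i - (∑ j ∈ s, n j) / #s * ∑ i ∈ s, g i
        - (∑ i ∈ s, (n i - (∑ j ∈ s, n j) / #s)) * a := by
    simp only [sub_mul, mul_sub, sum_sub_distrib, mul_sum, sum_mul]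
  rw [hexpand, hcentered]
  field_simp
  ring

lemma sum_abs_le_card_mul_sqrt (s : Finset ι) (f : ι → ℝ) :
    ∑ i ∈ s, |f i| ≤ #s * √((∑ i ∈ s, f i ^ 2) / #s) := by
  have hcs := Real.sum_mul_le_sqrt_mul_sqrt s (fun i => |f i|) 1
  simp only [Pi.one_apply, mul_one, sq_abs, one_pow, sum_const, nsmul_eq_mul] at hcs
  calc ∑ i ∈ s, |f i| ≤ √(∑ i ∈ s, f i ^ 2) * √(#s : ℝ) := hcs
    _ = #s * √((∑ i ∈ s, f i ^ 2) / #s) := by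
      rcases (Nat.cast_nonneg (α := ℝ) #s).eq_or_lt with hs | hs
      · simp [← hs]
      · rw [Real.sqrt_div' _ hs.le]
        field_simp
        rw [Real.sq_sqrt hs.le]

lemma abs_sum_mul_le_sum_abs_mul {x y : ι → ℝ} {B : ℝ} (hy : ∀ i ∈ s, |y i| ≤ B) :
    |∑ i ∈ s, x i * y i| ≤ (∑ i ∈ s, |x i|) * B :=
  calc |∑ i ∈ s, x i * y i| ≤ ∑ i ∈ s, |x i| * |y i| := by
        simpa only [abs_mul] using abs_sum_le_sum_abs (fun i => x i * y i) s
    _ ≤ ∑ i ∈ s, |x i| * B :=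
        sum_le_sum fun i hi => mul_le_mul_of_nonneg_left (hy i hi) (abs_nonneg _)
    _ = (∑ i ∈ s, |x i|) * B := (sum_mul ..).symm

theorem abs_weighted_average_sub_le {n g : ι → ℝ}
    (hn : ∀ i ∈ s, 0 < n i) (hs : s.Nonempty) {a B : ℝ} (hB : ∀ i ∈ s, |g i - a| ≤ B)
    {nw μ σ : ℝ} (hnw : nw = ∑ i ∈ s, n i) (hμ : μ = nw / #s)
    (hσ : σ = √((∑ i ∈ s, (n i - μ) ^ 2) / #s)) :
    |1 / nw * ∑ i ∈ s, n i * g i - a| ≤ |1 / #s * ∑ i ∈ s, g i - a| + σ / μ * B := by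
  have hnw_pos : 0 < nw := hnw ▸ sum_pos hn hs
  have hB_nonneg : 0 ≤ B := (abs_nonneg _).trans (hB _ hs.choose_spec)
  have hcov : |1 / nw * ∑ i ∈ s, (n i - μ) * (g i - a)| ≤ σ / μ * B :=
    calc |1 / nw * ∑ i ∈ s, (n i - μ) * (g i - a)|
        = 1 / nw * |∑ i ∈ s, (n i - μ) * (g i - a)| := by
          rw [abs_mul, abs_of_pos (by positivity)]
      _ ≤ 1 / nw * ((∑ i ∈ s, |n i - μ|) * B) := by
          gcongr
          exact abs_sum_mul_le_sum_abs_mul hB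
      _ ≤ 1 / nw * (#s * σ * B) := by
          gcongr
          exact hσ ▸ sum_abs_le_card_mul_sqrt s _
      _ = σ / μ * B := by
          have : (#s : ℝ) ≠ 0 := by simp [hs.ne_empty]
          rw [hμ]
          field_simp
  calc |1 / nw * ∑ i ∈ s, n i * g i - a|
      = |(1 / #s * ∑ i ∈ s, g i - a) + 1 / nw * ∑ i ∈ s, (n i - μ) * (g i - a)| := by
        rw [hμ, hnw, weighted_average_sub_eq a (hnw ▸ hnw_pos.ne')]
    _ ≤ |1 / #s * ∑ i ∈ s, g i - a| + σ / μ * B := (abs_add_le _ _).trans (by gcongr)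

end WeightedAverage

theorem count_weighted_average_deviation_general (g : ℤ → ℝ) (hg : ∀ t, 0 ≤ g t)
    (ε : ℝ) (hε : 0 ≤ ε) (hdiff : ∀ t : ℤ, |g (t + 1) - g t| ≤ ε * g t)
    (w : ℕ) (hw : 1 ≤ w) (hwε : (w : ℝ) * ε < 1)
    (t : ℤ) (n : ℤ → ℝ) (hn : ∀ i ∈ Finset.Icc (-(w : ℤ)) (w : ℤ), 0 < n (t + i))
    (nw μn σn : ℝ)
    (hnw : nw = ∑ i ∈ Finset.Icc (-(w : ℤ)) (w : ℤ), n (t + i))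
    (hμn : μn = nw / (2 * w + 1))
    (hσn : σn = Real.sqrt
      ((∑ i ∈ Finset.Icc (-(w : ℤ)) (w : ℤ), (n (t + i) - μn) ^ 2) / (2 * w + 1)))
    (E : ℝ)
    (hunweighted :
      |(1 / (2 * (w : ℝ) + 1)) * (∑ i ∈ Finset.Icc (-(w : ℤ)) (w : ℤ), g (t + i)) - g t|
        ≤ E * g t) :
    |(1 / nw) * (∑ i ∈ Finset.Icc (-(w : ℤ)) (w : ℤ), n (t + i) * g (t + i)) - g t|
      ≤ (E + (σn / μn) * ((w : ℝ) * ε / (1 - (w : ℝ) * ε))) * g t := by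
  have hcard : ((#(Icc (-(w : ℤ)) w) : ℕ) : ℝ) = 2 * w + 1 := by
    rw [Int.card_Icc, show (w : ℤ) + 1 - -w = (2 * w + 1 : ℕ) by push_cast; ring,
      Int.toNat_natCast]
    push_cast
    ring
  have hε₁ : ε ≤ 1 := by
    nlinarith [show (1 : ℝ) ≤ w from mod_cast hw]
  have hwindow : ∀ i ∈ Icc (-(w : ℤ)) w, |g (t + i) - g t| ≤ w * ε / (1 - w * ε) * g t :=
    fun i hi => abs_sub_le_of_abs_succ_sub_le hg hε hε₁ hdiff hwε (by grind)
  rw [← hcard] at hμn hσn hunweighted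
  have := abs_weighted_average_sub_le hn ⟨0, by simp⟩ hwindow hnw hμn hσn
  linarith

/-- Paper Lemma 8: the count-weighted moving average of a nonnegative sequence
with relatively bounded first differences deviates from the center value by at
most the relative factor `γ = E + (σ_n/μ_n)·(w·ε/(1 − w·ε))`, where `E` bounds
the relative deviation of the unweighted moving average. -/
theorem count_weighted_average_deviation (g : ℤ → ℝ) (hg : ∀ t, 0 ≤ g t)
    (ε : ℝ) (hε : 0 ≤ ε) (hdiff : ∀ t : ℤ, |g (t + 1) - g t| ≤ ε * g t)
    (w : ℕ) (hw : 1 ≤ w) (hwε : (w : ℝ) * ε < 1)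
    (t : ℤ) (n : ℤ → ℝ) (hn : ∀ i ∈ Finset.Icc (-(w : ℤ)) (w : ℤ), 0 < n (t + i))
    (nw μn σn : ℝ)
    (hnw : nw = ∑ i ∈ Finset.Icc (-(w : ℤ)) (w : ℤ), n (t + i))
    (hμn : μn = nw / (2 * w + 1))
    (hσn : σn = Real.sqrt
      ((∑ i ∈ Finset.Icc (-(w : ℤ)) (w : ℤ), (n (t + i) - μn) ^ 2) / (2 * w + 1)))
    (E : ℝ) (hE : 0 ≤ E)
    (hunweighted :
      |(1 / (2 * (w : ℝ) + 1)) * (∑ i ∈ Finset.Icc (-(w : ℤ)) (w : ℤ), g (t + i)) - g t|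
        ≤ E * g t) :
    |(1 / nw) * (∑ i ∈ Finset.Icc (-(w : ℤ)) (w : ℤ), n (t + i) * g (t + i)) - g t|
      ≤ (E + (σn / μn) * ((w : ℝ) * ε / (1 - (w : ℝ) * ε))) * g t :=
  count_weighted_average_deviation_general g hg ε hε hdiff w hw hwε t n hn nw μn σn hnw hμn hσn E
    hunweighted
end
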